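/- The three coordinate points (1:0:0), (0:1:0), (0:0:1) form a tangential triangle for the cubic C: xy² + yz² + zx² + 3bxyz = 0 (with b³ ≠ −1): the tangent line to C at each coordinate point meets C at the next coordinate point with the required multiplicities. -/

import Mathlib

open MvPolynomial

noncomputable section

abbrev Poly3 := MvPolynomial (Fin 3) ℂ

/-- The multiplicative set of polynomials not vanishing at `v`. -/
def nonvanishing (v : Fin 3 → ℂ) : Submonoid Poly3 where
  carrier := {g | aeval v g ≠ 0}
  mul_mem' := by
    intro a b ha hb
    simp only [Set.mem_setOf_eq, map_mul] at *
    exact mul_ne_zero ha hb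
  one_mem' := by simp

/-- An index where `v` does not vanish (if any). -/
def chartIdx (v : Fin 3 → ℂ) : Fin 3 :=
  if h : ∃ i, v i ≠ 0 then h.choose else 0

/-- Local intersection multiplicity at the point of `ℙ²` represented by `v`:
the `ℂ`-dimension of the localization at `v` of the coordinate ring of the
scheme cut out by `F`, `G` and the affine chart equation. -/
def imult (F G : Poly3) (v : Fin 3 → ℂ) : ℕ :=
  letI : Module ℂ (LocalizedModule (nonvanishing v)
      (Poly3 ⧸ Ideal.span {F, G, X (chartIdx v) - MvPolynomial.C (v (chartIdx v))})) :=
    Module.compHom _ (algebraMap ℂ Poly3)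
  Module.finrank ℂ (LocalizedModule (nonvanishing v)
    (Poly3 ⧸ Ideal.span {F, G, X (chartIdx v) - MvPolynomial.C (v (chartIdx v))}))

/-- `w` represents the same projective point as `v`. -/
def SameProjPoint (v w : Fin 3 → ℂ) : Prop := ∃ c : ℂ, c ≠ 0 ∧ w = c • v

/-- The curve `F = 0` is smooth (nonsingular) at the point represented by `v`. -/
def CurveSmoothAt (F : Poly3) (v : Fin 3 → ℂ) : Prop := ∃ j, aeval v (pderiv j F) ≠ 0

/-- The plane curve `F = 0` is smooth. -/
def SmoothCurve (F : Poly3) : Prop :=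
  ∀ v : Fin 3 → ℂ, v ≠ 0 → aeval v F = 0 → CurveSmoothAt F v

/-- The linear form defining the (projective) tangent line to `F = 0`
at the point represented by `v`. -/
def tangentLine (F : Poly3) (v : Fin 3 → ℂ) : Poly3 :=
  ∑ j, MvPolynomial.C (aeval v (pderiv j F)) * X j

/-- The curves `F = 0` and `G = 0` meet only at the point represented by `v`. -/
def OnlyMeetAt (F G : Poly3) (v : Fin 3 → ℂ) : Prop :=
  ∀ w : Fin 3 → ℂ, w ≠ 0 → aeval w F = 0 → aeval w G = 0 → SameProjPoint v w

/-- The intersection cycle of `F = 0` and `G = 0` is `9p`, where `p` is the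
point represented by `v`. -/
def CycleNine (F G : Poly3) (v : Fin 3 → ℂ) : Prop :=
  aeval v F = 0 ∧ aeval v G = 0 ∧ OnlyMeetAt F G v ∧ imult F G v = 9

/-- `v` represents an inflection point of the curve `F = 0`. -/
def IsFlex (F : Poly3) (v : Fin 3 → ℂ) : Prop :=
  aeval v F = 0 ∧ 3 ≤ imult F (tangentLine F v) v

end

/-- The tangent line to `F = 0` at the point represented by `a` meets the curve
in the cycle `2a + b`. -/
def TangentMeetsInCycle (F : Poly3) (a b : Fin 3 → ℂ) : Prop :=
  imult F (tangentLine F a) a = 2 ∧ imult F (tangentLine F a) b = 1 ∧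
  ∀ w : Fin 3 → ℂ, w ≠ 0 → MvPolynomial.aeval w F = 0 →
    MvPolynomial.aeval w (tangentLine F a) = 0 →
    SameProjPoint a w ∨ SameProjPoint b w

/-- `p₁, p₂, p₃` form a tangential triangle for the cubic `F = 0`. -/
def TangentialTriangle (F : Poly3) (p₁ p₂ p₃ : Fin 3 → ℂ) : Prop :=
  TangentMeetsInCycle F p₁ p₂ ∧ TangentMeetsInCycle F p₂ p₃ ∧
    TangentMeetsInCycle F p₃ p₁

/-!
At the coordinate point `e i` the cubic can be written `X i * X j ^ 2 + X k * Q`, where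
`(i, j, k)` runs over the cyclic shifts of `(0, 1, 2)`, and its tangent line there is `X k = 0`.
On that line the cubic restricts to `X i * X j ^ 2`, which vanishes only at `e i` and `e j`.
In the chart `X i = 1` the scheme cut out by the cubic and the tangent is `Spec ℂ[T]/(T²)`,
in the chart `X j = 1` it is `Spec ℂ[T]/(T)`; both are already local at the point, so
localizing does not change their dimensions `2` and `1`.
-/

theorem Fin.three_eq_or_eq_or_eq {i j k : Fin 3} (hij : i ≠ j) (hik : i ≠ k) (hjk : j ≠ k)
    (l : Fin 3) : l = i ∨ l = j ∨ l = k := by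
  omega

theorem Ideal.span_insert_eq_of_sub_mem {R : Type*} [CommRing R] {a b : R} {s : Set R}
    (h : a - b ∈ Ideal.span s) : Ideal.span (insert a s) = Ideal.span (insert b s) := by
  have hs : ∀ c, Ideal.span s ≤ Ideal.span (insert c s) := fun c =>
    Ideal.span_mono (Set.subset_insert c s)
  have ha : a ∈ Ideal.span (insert b s) := by
    simpa using add_mem (Ideal.subset_span (Set.mem_insert b s)) (hs b h)
  have hb : b ∈ Ideal.span (insert a s) := by
    simpa using sub_mem (Ideal.subset_span (Set.mem_insert a s)) (hs a h)
  exact le_antisymm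
    (Ideal.span_le.2 (Set.insert_subset_iff.2 ⟨ha, Ideal.span_le.1 (hs b)⟩))
    (Ideal.span_le.2 (Set.insert_subset_iff.2 ⟨hb, Ideal.span_le.1 (hs a)⟩))

section Localization

variable {R A : Type*} [CommRing R] [CommRing A] [Algebra R A]

theorem isLocalizedModule_id_of_isUnit (S : Submonoid R)
    (h : ∀ s : S, IsUnit (algebraMap R A s)) :
    IsLocalizedModule S (LinearMap.id : A →ₗ[R] A) where
  map_units s := by
    rw [← (Algebra.lmul R A).commutes]
    exact (h s).map _
  surj m := ⟨(m, 1), one_smul _ _⟩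
  exists_of_eq h := ⟨1, congr_arg _ h⟩

theorem finrank_localizedModule_of_isUnit (K : Type*) [Field K] [Algebra K R] [Algebra K A]
    [IsScalarTower K R A] (S : Submonoid R) (h : ∀ s : S, IsUnit (algebraMap R A s)) :
    letI := Module.compHom (LocalizedModule S A) (algebraMap K R)
    Module.finrank K (LocalizedModule S A) = Module.finrank K A := by
  let _ := Module.compHom (LocalizedModule S A) (algebraMap K R)
  have := isLocalizedModule_id_of_isUnit S h
  let e := IsLocalizedModule.iso S (LinearMap.id : A →ₗ[R] A)
  exact LinearEquiv.finrank_eq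
    { e with
      map_smul' := fun k x => (e.map_smul (algebraMap K R k) x).trans (algebraMap_smul R k (e x)) }

end Localization

theorem AdjoinRoot.isUnit_mk_X_pow {R : Type*} [CommRing R] (n : ℕ) {p : Polynomial R}
    (hp : IsUnit (p.coeff 0)) : IsUnit (AdjoinRoot.mk (Polynomial.X ^ n) p) := by
  obtain ⟨q, hq⟩ := Polynomial.X_dvd_sub_C (p := p)
  have hnil : IsNilpotent (AdjoinRoot.mk (Polynomial.X ^ n) (Polynomial.X * q)) :=
    ⟨n, by rw [map_mul, mul_pow, ← map_pow, AdjoinRoot.mk_self, zero_mul]⟩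
  rw [sub_eq_iff_eq_add'.mp hq, map_add, AdjoinRoot.mk_C]
  exact hnil.isUnit_add_left_of_commute (hp.map _) (Commute.all _ _)

noncomputable section Line

variable {R : Type*} [CommRing R] {i j k : Fin 3}

/-- Restriction to the line `X k = 0` of the chart `X i = 1`, parametrised by `X j`. -/
def restrictToLine (i j : Fin 3) : MvPolynomial (Fin 3) R →ₐ[R] Polynomial R :=
  aeval fun l => if l = i then 1 else if l = j then Polynomial.X else 0

theorem coeff_zero_restrictToLine (hij : i ≠ j) (p : MvPolynomial (Fin 3) R) :
    (restrictToLine i j p).coeff 0 = aeval (Pi.single i (1 : R)) p := by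
  have : (Polynomial.aeval (0 : R)).comp (restrictToLine (R := R) i j) =
      aeval (Pi.single i (1 : R)) := by
    refine algHom_ext fun l => ?_
    by_cases hli : l = i
    · simp [restrictToLine, hli]
    · by_cases hlj : l = j
      · simp [restrictToLine, hlj, hij.symm]
      · simp [restrictToLine, hli, hlj]
  rw [Polynomial.coeff_zero_eq_eval_zero, ← Polynomial.coe_aeval_eq_eval, ← this]
  rfl

variable (R) in
def quotientEquivAdjoinRoot (hij : i ≠ j) (hik : i ≠ k) (hjk : j ≠ k) (n : ℕ) :
    (MvPolynomial (Fin 3) R ⧸ Ideal.span {X j ^ n, X k, (X i - 1 : MvPolynomial (Fin 3) R)})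
      ≃ₐ[R] AdjoinRoot (Polynomial.X ^ n : Polynomial R) := by
  set I := Ideal.span {X j ^ n, X k, (X i - 1 : MvPolynomial (Fin 3) R)}
  have hI : ∀ p ∈ ({X j ^ n, X k, X i - 1} : Set _), Ideal.Quotient.mk I p = 0 := fun p hp =>
    Ideal.Quotient.eq_zero_iff_mem.2 (Ideal.subset_span hp)
  let f : _ ⧸ I →ₐ[R] AdjoinRoot (Polynomial.X ^ n : Polynomial R) :=
    Ideal.Quotient.liftₐ _ ((AdjoinRoot.mkₐ _).comp (restrictToLine i j)) fun a ha => by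
      refine (Ideal.span_le (I := RingHom.ker _)).2 ?_ ha
      simp [Set.insert_subset_iff, restrictToLine, hij.symm, hik.symm, hjk.symm,
        AdjoinRoot.mk_self]
  let g : AdjoinRoot (Polynomial.X ^ n : Polynomial R) →ₐ[R] _ ⧸ I :=
    AdjoinRoot.liftAlgHom _ (Algebra.ofId _ _) (Ideal.Quotient.mk I (X j)) (by
      simpa [← map_pow] using hI _ (by simp))
  have hf : ∀ p, f (Ideal.Quotient.mk I p) = AdjoinRoot.mk _ (restrictToLine i j p) :=
    fun _ => rfl
  refine AlgEquiv.ofAlgHom f g (AdjoinRoot.algHom_ext ?_)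
    (Ideal.Quotient.algHom_ext _ <| algHom_ext fun l => ?_)
  · simp [g, hf, restrictToLine, hij.symm]
  · simp only [AlgHom.comp_apply, Ideal.Quotient.mkₐ_eq_mk, hf, AlgHom.id_apply]
    rcases Fin.three_eq_or_eq_or_eq hij hik hjk l with rfl | rfl | rfl
    · have h1 := hI (X l - 1) (by simp)
      rw [map_sub, map_one, sub_eq_zero] at h1
      simpa [g, restrictToLine] using h1.symm
    · simp [g, restrictToLine, hij.symm]
    · simpa [g, restrictToLine, hik.symm, hjk.symm, hik, hjk] using (hI (X l) (by simp)).symm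

theorem quotientEquivAdjoinRoot_mk (hij : i ≠ j) (hik : i ≠ k) (hjk : j ≠ k) (n : ℕ)
    (p : MvPolynomial (Fin 3) R) :
    quotientEquivAdjoinRoot R hij hik hjk n (Ideal.Quotient.mk _ p) =
      AdjoinRoot.mk _ (restrictToLine i j p) :=
  rfl

end Line

section Multiplicity

variable {i j k : Fin 3}

theorem chartIdx_single (i : Fin 3) : chartIdx (Pi.single i 1) = i := by
  have h : ∃ l, (Pi.single i 1 : Fin 3 → ℂ) l ≠ 0 := ⟨i, by simp⟩
  rw [chartIdx, dif_pos h]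
  by_contra hne
  exact h.choose_spec (Pi.single_eq_of_ne hne 1)

theorem isUnit_mk_of_mem_nonvanishing (hij : i ≠ j) (hik : i ≠ k) (hjk : j ≠ k) (n : ℕ)
    {s : Poly3} (hs : s ∈ nonvanishing (Pi.single i 1)) :
    IsUnit (Ideal.Quotient.mk (Ideal.span {X j ^ n, X k, X i - 1}) s) := by
  have hunit := AdjoinRoot.isUnit_mk_X_pow n (p := restrictToLine i j s)
    (by rw [coeff_zero_restrictToLine hij]; exact Ne.isUnit hs)
  rw [← quotientEquivAdjoinRoot_mk hij hik hjk] at hunit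
  exact (isUnit_map_iff _ _).1 hunit

theorem imult_eq_finrank_of_isUnit {F G : Poly3} {v : Fin 3 → ℂ} {I : Ideal Poly3}
    (h : Ideal.span {F, G, X (chartIdx v) - C (v (chartIdx v))} = I)
    (hunit : ∀ s ∈ nonvanishing v, IsUnit (Ideal.Quotient.mk I s)) :
    imult F G v = Module.finrank ℂ (Poly3 ⧸ I) := by
  subst h
  exact finrank_localizedModule_of_isUnit ℂ _ fun s => hunit s s.2

theorem imult_single_eq (hij : i ≠ j) (hik : i ≠ k) (hjk : j ≠ k) {F G : Poly3} {n : ℕ}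
    (h : Ideal.span {F, G, X i - 1} = Ideal.span {X j ^ n, X k, X i - 1}) :
    imult F G (Pi.single i 1) = n := by
  rw [imult_eq_finrank_of_isUnit (by rw [chartIdx_single, Pi.single_eq_same, map_one, h])
      fun s => isUnit_mk_of_mem_nonvanishing hij hik hjk n,
    (quotientEquivAdjoinRoot ℂ hij hik hjk n).toLinearEquiv.finrank_eq,
    (AdjoinRoot.powerBasis (pow_ne_zero n Polynomial.X_ne_zero)).finrank,
    AdjoinRoot.powerBasis_dim, Polynomial.natDegree_X_pow]

end Multiplicity

section TangentLine

variable {i j k : Fin 3}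

theorem sameProjPoint_single {w : Fin 3 → ℂ} (hw : w ≠ 0) (h : ∀ l ≠ i, w l = 0) :
    SameProjPoint (Pi.single i 1) w := by
  refine ⟨w i, fun hi => hw (funext fun l => ?_), funext fun l => ?_⟩
  · by_cases hl : l = i
    · rw [hl, hi, Pi.zero_apply]
    · exact h l hl
  · by_cases hl : l = i
    · simp [hl]
    · simp [hl, h l hl]

theorem tangentMeetsInCycle_single (hij : i ≠ j) (hik : i ≠ k) (hjk : j ≠ k) {F Q : Poly3}
    (hF : F = X i * X j ^ 2 + X k * Q) (hT : tangentLine F (Pi.single i 1) = X k) :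
    TangentMeetsInCycle F (Pi.single i 1) (Pi.single j 1) := by
  refine ⟨imult_single_eq hij hik hjk ?_, imult_single_eq hij.symm hjk hik ?_, ?_⟩
  · rw [hT, Ideal.span_insert_eq_of_sub_mem (b := X j ^ 2)]
    exact Ideal.mem_span_pair.2 ⟨Q, X j ^ 2, by rw [hF]; ring⟩
  · rw [hT, Ideal.span_insert_eq_of_sub_mem (b := X i ^ 1)]
    exact Ideal.mem_span_pair.2 ⟨Q, X i * (X j + 1), by rw [hF]; ring⟩
  · intro w hw hFw hTw
    rw [hT, aeval_X] at hTw
    have hcubic : w i * w j ^ 2 = 0 := by simpa [hF, hTw] using hFw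
    rcases mul_eq_zero.1 hcubic with hwi | hwj
    · refine Or.inr (sameProjPoint_single hw fun l hl => ?_)
      rcases Fin.three_eq_or_eq_or_eq hij hik hjk l with rfl | rfl | rfl
      exacts [hwi, absurd rfl hl, hTw]
    · refine Or.inl (sameProjPoint_single hw fun l hl => ?_)
      rcases Fin.three_eq_or_eq_or_eq hij hik hjk l with rfl | rfl | rfl
      exacts [absurd rfl hl, pow_eq_zero_iff two_ne_zero |>.1 hwj, hTw]

end TangentLine

open MvPolynomial in
theorem coordinate_points_tangential_triangle_general (b : ℂ) :
    TangentialTriangle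
      (X 0 * X 1 ^ 2 + X 1 * X 2 ^ 2 + X 2 * X 0 ^ 2 +
        MvPolynomial.C (3 * b) * (X 0 * X 1 * X 2) : Poly3)
      ![1, 0, 0] ![0, 1, 0] ![0, 0, 1] := by
  have e₀ : (![1, 0, 0] : Fin 3 → ℂ) = Pi.single 0 1 := by ext l; fin_cases l <;> rfl
  have e₁ : (![0, 1, 0] : Fin 3 → ℂ) = Pi.single 1 1 := by ext l; fin_cases l <;> rfl
  have e₂ : (![0, 0, 1] : Fin 3 → ℂ) = Pi.single 2 1 := by ext l; fin_cases l <;> rfl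
  rw [e₀, e₁, e₂]
  refine ⟨tangentMeetsInCycle_single (k := 2)
      (Q := X 1 * X 2 + X 0 ^ 2 + C (3 * b) * (X 0 * X 1))
      (by decide) (by decide) (by decide) (by ring) ?_,
    tangentMeetsInCycle_single (k := 0)
      (Q := X 1 ^ 2 + X 0 * X 2 + C (3 * b) * (X 1 * X 2))
      (by decide) (by decide) (by decide) (by ring) ?_,
    tangentMeetsInCycle_single (k := 1)
      (Q := X 0 * X 1 + X 2 ^ 2 + C (3 * b) * (X 0 * X 2))
      (by decide) (by decide) (by decide) (by ring) ?_⟩ <;>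
  simp [tangentLine, Fin.sum_univ_three, pderiv_X]

open MvPolynomial in
/-- The three coordinate points `(1:0:0)`, `(0:1:0)`, `(0:0:1)` form a
tangential triangle for the cubic `xy² + yz² + zx² + 3bxyz = 0` (with
`b³ ≠ -1`). -/
theorem coordinate_points_tangential_triangle (b : ℂ) (hb : b ^ 3 ≠ -1) :
    TangentialTriangle
      (X 0 * X 1 ^ 2 + X 1 * X 2 ^ 2 + X 2 * X 0 ^ 2 +
        MvPolynomial.C (3 * b) * (X 0 * X 1 * X 2) : Poly3)
      ![1, 0, 0] ![0, 1, 0] ![0, 0, 1] :=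
  coordinate_points_tangential_triangle_general b
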